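/- Let μ, κ ∈ ℝ with μ > 0 and κ > 0, set σ = √(μ/κ), and let K₁ ∈ ℝ. For τ ∈ (0, 1/μ) define the solitary-wave profile q̃₀^τ(x) = √2 σ sech( √(μ(1 − μτ)) x + K₁ ), and define the NLS ground-state profile u⁺(x) = √2 σ sech( √μ x + K₁ ). Then there exist constants τ₀ ∈ (0, 1/μ) and C > 0 such that for all τ ∈ (0, τ₀) and all x ∈ ℝ, |q̃₀^τ(x) − u⁺(x)| ≤ C τ. In particular, q̃₀^τ converges uniformly on ℝ, and linearly in τ, to u⁺ as τ → 0. -/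
import Mathlib

private lemma exp_abs_le_two_cosh (y : ℝ) : Real.exp |y| ≤ 2 * Real.cosh y := by
  rw [Real.cosh_eq]
  rcases abs_cases y with ⟨h, _⟩ | ⟨h, _⟩ <;> rw [h] <;>
    nlinarith [Real.exp_pos y, Real.exp_pos (-y)]

private lemma abs_sinh_le_cosh (y : ℝ) : |Real.sinh y| ≤ Real.cosh y := by
  have h1 := Real.cosh_pos y
  have h2 : Real.cosh y ^ 2 = Real.sinh y ^ 2 + 1 := Real.cosh_sq y
  rw [abs_le]
  constructor <;> nlinarith

set_option maxHeartbeats 1000000 in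
/-- The solitary-wave profiles q̃₀^τ(x) = √2 σ sech(√(μ(1−μτ))x + K₁)
converge uniformly on ℝ, linearly in τ, to the NLS ground state
u⁺(x) = √2 σ sech(√μ x + K₁) as τ → 0. -/
theorem nlsh_solitary_uniform_linear_convergence (μ κ : ℝ)
    (hμ : 0 < μ) (hκ : 0 < κ) (K₁ : ℝ)
    (σ : ℝ) (hσ : σ = Real.sqrt (μ / κ)) :
    ∃ τ₀ : ℝ, 0 < τ₀ ∧ τ₀ < 1 / μ ∧ ∃ C > 0, ∀ τ : ℝ, 0 < τ → τ < τ₀ → ∀ x : ℝ,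
      |Real.sqrt 2 * σ * (1 / Real.cosh (Real.sqrt (μ * (1 - μ * τ)) * x + K₁))
        - Real.sqrt 2 * σ * (1 / Real.cosh (Real.sqrt μ * x + K₁))| ≤ C * τ := by
  have hσpos : 0 < σ := by
    rw [hσ]; exact Real.sqrt_pos.mpr (div_pos hμ hκ)
  set a₀ : ℝ := Real.sqrt (μ / 2) with ha₀
  have ha₀pos : 0 < a₀ := Real.sqrt_pos.mpr (by positivity)
  have h2pos : (0:ℝ) < Real.sqrt 2 := Real.sqrt_pos.mpr (by norm_num)
  have hbpos : 0 < Real.sqrt μ := Real.sqrt_pos.mpr hμ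
  refine ⟨1 / (2 * μ), by positivity, ?_,
    Real.sqrt 2 * σ * (2 * Real.exp |K₁| / a₀) * (Real.sqrt μ * μ),
    by positivity, ?_⟩
  · rw [div_lt_div_iff₀ (by positivity) hμ]; nlinarith
  intro τ hτ hττ x
  have hμτ : μ * τ < 1 / 2 := by
    rw [lt_div_iff₀ (by positivity : (0:ℝ) < 2*μ)] at hττ
    nlinarith
  have h1 : (1:ℝ)/2 < 1 - μ * τ := by linarith
  have hμτpos : 0 < μ * τ := by positivity
  set a : ℝ := Real.sqrt (μ * (1 - μ * τ)) with ha
  set b : ℝ := Real.sqrt μ with hb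
  have hab : a ≤ b := Real.sqrt_le_sqrt (by nlinarith)
  have haa : a₀ ≤ a := Real.sqrt_le_sqrt (by nlinarith)
  have hapos : 0 < a := lt_of_lt_of_le ha₀pos haa
  set g : ℝ → ℝ := fun t => (Real.cosh (t * x + K₁))⁻¹ with hg
  set g' : ℝ → ℝ := fun t =>
    -(Real.sinh (t * x + K₁) * x) / (Real.cosh (t * x + K₁)) ^ 2 with hg'
  set M : ℝ := 2 * Real.exp |K₁| / a₀ with hM
  have hderiv : ∀ t ∈ Set.Icc a b, HasDerivWithinAt g (g' t) (Set.Icc a b) t := by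
    intro t _
    have h1 : HasDerivAt (fun t : ℝ => t * x + K₁) x t := by
      simpa using ((hasDerivAt_id t).mul_const x).add_const K₁
    have h2 : HasDerivAt (fun t : ℝ => Real.cosh (t * x + K₁))
        (Real.sinh (t * x + K₁) * x) t := h1.cosh
    exact (h2.inv (Real.cosh_pos _).ne').hasDerivWithinAt
  have hbound : ∀ t ∈ Set.Ico a b, ‖g' t‖ ≤ M := by
    intro t ht
    have hta : a ≤ t := ht.1
    set y : ℝ := t * x + K₁ with hy
    have hcpos : 0 < Real.cosh y := Real.cosh_pos y
    -- |y| ≥ a₀|x| - |K₁|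
    have hylb : a₀ * |x| - |K₁| ≤ |y| := by
      have h' : |t * x| ≤ |y| + |K₁| := by
        calc |t * x| = |(t * x + K₁) + (-K₁)| := by ring_nf
          _ ≤ |t * x + K₁| + |(-K₁)| := abs_add_le _ _
          _ = |y| + |K₁| := by rw [abs_neg]
      have htx : a₀ * |x| ≤ |t * x| := by
        rw [abs_mul]
        exact mul_le_mul_of_nonneg_right
          (le_trans (le_trans haa hta) (le_abs_self t)) (abs_nonneg x)
      linarith
    have hcosh_lb : Real.exp (a₀ * |x| - |K₁|) ≤ 2 * Real.cosh y :=
      le_trans (Real.exp_le_exp.mpr hylb) (exp_abs_le_two_cosh y)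
    have step1 : ‖g' t‖ ≤ |x| / Real.cosh y := by
      rw [hg']
      simp only [Real.norm_eq_abs, abs_div, abs_neg, abs_mul, ← hy]
      rw [abs_of_pos (show (0:ℝ) < Real.cosh y ^ 2 by positivity),
        div_le_div_iff₀ (by positivity) hcpos]
      have hs := abs_sinh_le_cosh y
      nlinarith [mul_le_mul_of_nonneg_right hs
        (mul_nonneg (abs_nonneg x) hcpos.le), abs_nonneg x]
    have step2 : |x| / Real.cosh y ≤ M := by
      rw [hM, div_le_div_iff₀ hcpos ha₀pos]
      have hE : a₀ * |x| ≤ Real.exp (a₀ * |x|) := by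
        have := Real.add_one_le_exp (a₀ * |x|); linarith
      have hexp : Real.exp (a₀ * |x| - |K₁|) * Real.exp |K₁| = Real.exp (a₀ * |x|) := by
        rw [← Real.exp_add]; ring_nf
      nlinarith [Real.exp_pos |K₁|,
        mul_le_mul_of_nonneg_right hcosh_lb (Real.exp_pos |K₁|).le]
    exact le_trans step1 step2
  have key := norm_image_sub_le_of_norm_deriv_le_segment' hderiv hbound b
    (Set.right_mem_Icc.mpr hab)
  rw [Real.norm_eq_abs] at key
  have hba : b - a ≤ Real.sqrt μ * (μ * τ) := by
    have hsm : a = Real.sqrt μ * Real.sqrt (1 - μ * τ) := by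
      rw [ha, Real.sqrt_mul hμ.le]
    have h0 : (0:ℝ) ≤ 1 - μ * τ := by linarith
    have hs1 : 1 - μ * τ ≤ Real.sqrt (1 - μ * τ) := by
      nlinarith [Real.sq_sqrt h0, Real.sqrt_nonneg (1 - μ * τ)]
    rw [hsm, hb]
    nlinarith [Real.sqrt_nonneg μ]
  have hgoal : Real.sqrt 2 * σ * (1 / Real.cosh (a * x + K₁))
        - Real.sqrt 2 * σ * (1 / Real.cosh (b * x + K₁))
      = Real.sqrt 2 * σ * -(g b - g a) := by
    simp only [hg, one_div]; ring
  calc |Real.sqrt 2 * σ * (1 / Real.cosh (a * x + K₁))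
        - Real.sqrt 2 * σ * (1 / Real.cosh (b * x + K₁))|
      = Real.sqrt 2 * σ * |g b - g a| := by
        rw [hgoal, abs_mul, abs_neg, abs_of_pos (by positivity)]
    _ ≤ Real.sqrt 2 * σ * (M * (b - a)) :=
        mul_le_mul_of_nonneg_left key (by positivity)
    _ ≤ Real.sqrt 2 * σ * (M * (Real.sqrt μ * (μ * τ))) := by
        have hMpos : 0 < M := by positivity
        exact mul_le_mul_of_nonneg_left
          (mul_le_mul_of_nonneg_left hba hMpos.le) (by positivity)
    _ = Real.sqrt 2 * σ * M * (Real.sqrt μ * μ) * τ := by ring
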